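/- Let B, C ∈ B(H). If w([[0, B], [C, 0]])² = (1/4)·max{ ‖|B|² + |C*|²‖, ‖|B*|² + |C|²‖ }, then ‖B + C*‖ = ‖B − C*‖. -/

import Mathlib

open ContinuousLinearMap

variable {H : Type*} [NormedAddCommGroup H] [InnerProductSpace ℂ H] [CompleteSpace H]

/-- The numerical radius of a bounded linear operator:
`w(T) = sup { |⟨Tx, x⟩| : ‖x‖ = 1 }`. -/
noncomputable def numRadius {E : Type*} [NormedAddCommGroup E] [InnerProductSpace ℂ E]
    (T : E →L[ℂ] E) : ℝ :=
  sSup {r : ℝ | ∃ x : E, ‖x‖ = 1 ∧ r = ‖(inner ℂ (T x) x : ℂ)‖}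

/-- The absolute value `|T| = (T*T)^(1/2)` of a bounded linear operator.
Note `opAbs (adjoint T) = (T T*)^(1/2) = |T*|`. -/
noncomputable def opAbs (T : H →L[ℂ] H) : H →L[ℂ] H := CFC.sqrt (adjoint T * T)

/-- The off-diagonal operator matrix `[[0, B], [C, 0]]` acting on `H ⊕ H`
(with the Hilbert space structure `WithLp 2 (H × H)`) by `(x₁, x₂) ↦ (B x₂, C x₁)`. -/
noncomputable def offDiag (B C : H →L[ℂ] H) :
    WithLp 2 (H × H) →L[ℂ] WithLp 2 (H × H) :=
  ((WithLp.prodContinuousLinearEquiv 2 ℂ H H).symm : (H × H) →L[ℂ] WithLp 2 (H × H)).comp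
    (((B.comp (ContinuousLinearMap.snd ℂ H H)).prod
        (C.comp (ContinuousLinearMap.fst ℂ H H))).comp
      ((WithLp.prodContinuousLinearEquiv 2 ℂ H H) : WithLp 2 (H × H) →L[ℂ] H × H))

/-! With `T = offDiag B C`, the real part of `⟪T (x, y), (x, y)⟫` is `Re ⟪(B + C*) y, x⟫`, so
`‖B + C*‖ ≤ 2 w(T)`; the same bound for `i T = offDiag (i B) (i C)` gives `‖B - C*‖ ≤ 2 w(T)`.
Conversely, the C*-parallelogram identity
`|B + C*|² + |B - C*|² = 2 (|B|² + |C*|²)` (and its adjoint form) bounds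
`2 max {‖|B|² + |C*|²‖, ‖|B*|² + |C|²‖}` by `‖B + C*‖² + ‖B - C*‖²`. Under the hypothesis this
forces `‖B + C*‖ = ‖B - C*‖ = 2 w(T)`. -/

section CStarRing

variable {A : Type*} [NonUnitalNormedRing A] [StarRing A] [CStarRing A] [NormedSpace ℝ A]

lemma two_mul_norm_star_mul_self_add_mul_star_le (a b : A) :
    2 * ‖star a * a + b * star b‖ ≤ ‖a + star b‖ ^ 2 + ‖a - star b‖ ^ 2 := by
  have hpar : star (a + star b) * (a + star b) + star (a - star b) * (a - star b) =
      2 • (star a * a + b * star b) := by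
    simp only [star_add, star_sub, star_star, add_mul, mul_add, sub_mul, mul_sub, two_nsmul]
    abel
  calc 2 * ‖star a * a + b * star b‖
      = ‖star (a + star b) * (a + star b) + star (a - star b) * (a - star b)‖ := by
        rw [hpar, RCLike.norm_nsmul ℝ, nsmul_eq_mul, Nat.cast_ofNat]
    _ ≤ ‖star (a + star b) * (a + star b)‖ + ‖star (a - star b) * (a - star b)‖ :=
        norm_add_le _ _
    _ = ‖a + star b‖ ^ 2 + ‖a - star b‖ ^ 2 := by
        simp only [CStarRing.norm_star_mul_self, sq]

lemma two_mul_norm_mul_star_add_star_mul_self_le (a b : A) :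
    2 * ‖a * star a + star b * b‖ ≤ ‖a + star b‖ ^ 2 + ‖a - star b‖ ^ 2 := by
  have h := two_mul_norm_star_mul_self_add_mul_star_le (star a) (star b)
  rwa [star_star, star_star, ← norm_star (star a + b), ← norm_star (star a - b), star_add,
    star_sub, star_star] at h

end CStarRing

lemma opAbs_sq (T : H →L[ℂ] H) : opAbs T ^ 2 = adjoint T * T :=
  CFC.sq_sqrt _ (star_eq_adjoint T ▸ star_mul_self_nonneg T)

lemma opAbs_adjoint_sq (T : H →L[ℂ] H) : opAbs (adjoint T) ^ 2 = T * adjoint T := by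
  rw [opAbs_sq, adjoint_adjoint]

lemma norm_le_two_mul_of_re_inner_le {𝕜 E F : Type*} [RCLike 𝕜] [NormedAddCommGroup E]
    [InnerProductSpace 𝕜 E] [NormedAddCommGroup F] [InnerProductSpace 𝕜 F] (S : E →L[𝕜] F)
    {M : ℝ} (hM : 0 ≤ M) (hS : ∀ x y, RCLike.re (inner 𝕜 (S y) x) ≤ M * (‖x‖ ^ 2 + ‖y‖ ^ 2)) :
    ‖S‖ ≤ 2 * M := by
  refine S.opNorm_le_bound (by positivity) fun y => ?_
  rcases eq_or_ne (S y) 0 with h0 | h0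
  · rw [h0, norm_zero]; positivity
  have hSy : 0 < ‖S y‖ := norm_pos_iff.mpr h0
  have hy : 0 < ‖y‖ := norm_pos_iff.mpr fun hy => h0 (by rw [hy, map_zero])
  set x : F := ((‖y‖ / ‖S y‖ : ℝ) : 𝕜) • S y
  have hre : RCLike.re (inner 𝕜 (S y) x) = ‖y‖ * ‖S y‖ := by
    rw [inner_smul_right, RCLike.re_ofReal_mul, inner_self_eq_norm_sq]
    field_simp
  have hx : ‖x‖ = ‖y‖ := by
    rw [norm_smul, RCLike.norm_ofReal, abs_of_nonneg (by positivity)]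
    field_simp
  have h := hS x y
  rw [hre, hx] at h
  exact le_of_mul_le_mul_left (by linarith) hy

section NumRadius

variable {E : Type*} [NormedAddCommGroup E] [InnerProductSpace ℂ E]

lemma numRadius_nonneg (T : E →L[ℂ] E) : 0 ≤ numRadius T :=
  Real.sSup_nonneg fun _ ⟨_, _, hr⟩ => hr ▸ norm_nonneg _

lemma norm_inner_le_numRadius (T : E →L[ℂ] E) {x : E} (hx : ‖x‖ = 1) :
    ‖inner ℂ (T x) x‖ ≤ numRadius T := by
  refine le_csSup ⟨‖T‖, ?_⟩ ⟨x, hx, rfl⟩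
  rintro _ ⟨y, hy, rfl⟩
  simpa [hy] using (norm_inner_le_norm (T y) y).trans
    (mul_le_mul_of_nonneg_right (T.le_opNorm y) (norm_nonneg y))

lemma norm_inner_le_numRadius_mul_sq (T : E →L[ℂ] E) (z : E) :
    ‖inner ℂ (T z) z‖ ≤ numRadius T * ‖z‖ ^ 2 := by
  rcases eq_or_ne z 0 with rfl | hz
  · simp
  have hz' : ‖z‖ ≠ 0 := norm_ne_zero_iff.mpr hz
  have h := norm_inner_le_numRadius T (x := (‖z‖⁻¹ : ℂ) • z) (by simp [norm_smul, hz'])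
  rw [map_smul, inner_smul_left, inner_smul_right, norm_mul, norm_mul, RCLike.norm_conj,
    norm_inv, Complex.norm_real, norm_norm] at h
  calc ‖inner ℂ (T z) z‖ = ‖z‖ ^ 2 * (‖z‖⁻¹ * (‖z‖⁻¹ * ‖inner ℂ (T z) z‖)) := by
        field_simp
    _ ≤ ‖z‖ ^ 2 * numRadius T := by gcongr
    _ = numRadius T * ‖z‖ ^ 2 := mul_comm _ _

lemma numRadius_smul (c : ℂ) (T : E →L[ℂ] E) : numRadius (c • T) = ‖c‖ * numRadius T := by
  rw [numRadius, numRadius, ← smul_eq_mul, ← Real.sSup_smul_of_nonneg (norm_nonneg c)]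
  congr 1
  ext r
  simp [Set.mem_smul_set, eq_comm, mul_comm]

lemma offDiag_smul (c : ℂ) (B C : E →L[ℂ] E) : offDiag (c • B) (c • C) = c • offDiag B C := rfl

end NumRadius

lemma re_inner_offDiag_toLp (B C : H →L[ℂ] H) (x y : H) :
    RCLike.re (inner ℂ (offDiag B C (WithLp.toLp 2 (x, y))) (WithLp.toLp 2 (x, y))) =
      RCLike.re (inner ℂ ((B + adjoint C) y) x) := by
  change RCLike.re (inner ℂ (B y) x + inner ℂ (C x) y) = _
  rw [← adjoint_inner_right C x y, map_add, inner_re_symm x, add_apply, inner_add_left, map_add]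

lemma norm_add_adjoint_le_two_mul_numRadius (B C : H →L[ℂ] H) :
    ‖B + adjoint C‖ ≤ 2 * numRadius (offDiag B C) := by
  refine norm_le_two_mul_of_re_inner_le _ (numRadius_nonneg _) fun x y => ?_
  rw [← re_inner_offDiag_toLp]
  calc _ ≤ ‖inner ℂ (offDiag B C (WithLp.toLp 2 (x, y))) (WithLp.toLp 2 (x, y))‖ :=
        RCLike.re_le_norm _
    _ ≤ numRadius (offDiag B C) * ‖WithLp.toLp 2 (x, y)‖ ^ 2 :=
        norm_inner_le_numRadius_mul_sq _ _
    _ = numRadius (offDiag B C) * (‖x‖ ^ 2 + ‖y‖ ^ 2) := by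
        rw [WithLp.prod_norm_sq_eq_of_L2]; rfl

lemma norm_sub_adjoint_le_two_mul_numRadius (B C : H →L[ℂ] H) :
    ‖B - adjoint C‖ ≤ 2 * numRadius (offDiag B C) := by
  have h := norm_add_adjoint_le_two_mul_numRadius (Complex.I • B) (Complex.I • C)
  rwa [offDiag_smul, numRadius_smul, Complex.norm_I, one_mul, adjoint.map_smulₛₗ,
    Complex.conj_I, neg_smul, ← sub_eq_add_neg, ← smul_sub, norm_smul, Complex.norm_I,
    one_mul] at h

theorem stmt_6 (B C : H →L[ℂ] H)
    (h : numRadius (offDiag B C) ^ 2 =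
      (1 / 4) * max ‖opAbs B ^ 2 + opAbs (adjoint C) ^ 2‖ ‖opAbs (adjoint B) ^ 2 + opAbs C ^ 2‖) :
    ‖B + adjoint C‖ = ‖B - adjoint C‖ := by
  set w := numRadius (offDiag B C)
  have hP : ‖B + adjoint C‖ ≤ 2 * w := norm_add_adjoint_le_two_mul_numRadius B C
  have hQ : ‖B - adjoint C‖ ≤ 2 * w := norm_sub_adjoint_le_two_mul_numRadius B C
  have hmax : 8 * w ^ 2 ≤ ‖B + adjoint C‖ ^ 2 + ‖B - adjoint C‖ ^ 2 := by
    have h₁ := two_mul_norm_star_mul_self_add_mul_star_le B C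
    have h₂ := two_mul_norm_mul_star_add_star_mul_self_le B C
    simp only [star_eq_adjoint] at h₁ h₂
    rw [opAbs_adjoint_sq, opAbs_adjoint_sq, opAbs_sq, opAbs_sq] at h
    linarith [max_le ((le_div_iff₀' two_pos).mpr h₁) ((le_div_iff₀' two_pos).mpr h₂)]
  have hsq : ‖B + adjoint C‖ ^ 2 = ‖B - adjoint C‖ ^ 2 := by
    nlinarith [norm_nonneg (B + adjoint C), norm_nonneg (B - adjoint C)]
  exact (sq_eq_sq₀ (norm_nonneg _) (norm_nonneg _)).mp hsq
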